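/- arXiv:2003.08201 — 9 statements merged into one kernel-verified Lean document; each statement's English description precedes it below -/
import Mathlib

section
/- Let n ≥ 1 be a natural number, let R be a commutative ℚ-algebra, let e ∈ R, and let Σ, L be n × n matrices over R satisfying Σ·Σ = (1/(n+1)) • (e • Σ), Σ·L = L·Σ = (1/(n+1)) • (e • L), and L·L = e • L. Then for every integer k ≥ 1, (Σ + L)^k = e^{k−1} • ( (1/(n+1)^{k−1}) • Σ + (((n+2)^k − 1)/(n+1)^k) • L ). -/
/-- powers of `Σ + L` for matrices satisfying the Reinhardt-domain
curvature relations. -/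
theorem pow_add_of_reinhardt_relations (n : ℕ) (hn : 1 ≤ n)
    {R : Type*} [CommRing R] [Algebra ℚ R]
    (e : R) (Sg L : Matrix (Fin n) (Fin n) R)
    (hSS : Sg * Sg = (1 / ((n : ℚ) + 1)) • (e • Sg))
    (hSL : Sg * L = (1 / ((n : ℚ) + 1)) • (e • L))
    (hLS : L * Sg = (1 / ((n : ℚ) + 1)) • (e • L))
    (hLL : L * L = e • L) :
    ∀ k : ℕ, 1 ≤ k →
      (Sg + L) ^ k =
        e ^ (k - 1) •
          ((1 / ((n : ℚ) + 1) ^ (k - 1)) • Sg +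
            ((((n : ℚ) + 2) ^ k - 1) / ((n : ℚ) + 1) ^ k) • L) := by
  have hne : ((n : ℚ) + 1) ≠ 0 := by positivity
  intro k hk
  induction k, hk using Nat.le_induction with
  | base =>
    have h1 : ((n : ℚ) + 2 - 1) / ((n : ℚ) + 1) = 1 := by
      rw [div_eq_one_iff_eq hne]; ring
    simp [h1]
  | succ k hk ih =>
    obtain ⟨j, rfl⟩ : ∃ j, k = j + 1 := ⟨k - 1, by omega⟩
    have hcoef :
        (1 / ((n : ℚ) + 1) ^ j) * (1 / ((n : ℚ) + 1))
          + ((((n : ℚ) + 2) ^ (j + 1) - 1) / ((n : ℚ) + 1) ^ (j + 1)) * (1 / ((n : ℚ) + 1))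
          + (((n : ℚ) + 2) ^ (j + 1) - 1) / ((n : ℚ) + 1) ^ (j + 1)
        = (((n : ℚ) + 2) ^ (j + 1 + 1) - 1) / ((n : ℚ) + 1) ^ (j + 1 + 1) := by
      field_simp
      ring
    have step : (Sg + L) ^ (j + 1 + 1) = (Sg + L) ^ (j + 1) * (Sg + L) := pow_succ _ _
    rw [step, ih]
    simp only [Nat.add_sub_cancel]
    rw [smul_mul_assoc, add_mul, smul_mul_assoc, smul_mul_assoc, mul_add, mul_add,
      hSS, hSL, hLS, hLL]
    have hA : 1 / ((n : ℚ) + 1) ^ (j + 1) = 1 / ((n : ℚ) + 1) ^ j * (1 / ((n : ℚ) + 1)) := by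
      rw [div_mul_div_comm, one_mul, pow_succ]
    rw [← hcoef, hA, pow_succ]
    module
end

section
/- Let n ≥ 1 be a natural number, let R be a commutative ℚ-algebra, let e ∈ R, and let Σ, L be n × n matrices over R satisfying Σ·Σ = (1/(n+1)) • (e • Σ), Σ·L = L·Σ = (1/(n+1)) • (e • L), L·L = e • L, trace Σ = e, and trace L = −e. Then for every integer k ≥ 1, trace((Σ + L)^k) = ((n+2)·(1 − (n+2)^{k−1})/(n+1)^k) • e^k. -/
/-!
With `q = 1/(n+1)`, put `P = Σ - q L` and `Q = (1 + q) L`, so that `Σ + L = P + Q`.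
The relations say exactly that `P` and `Q` are orthogonal (`P Q = Q P = 0`) and
"idempotent up to scalars": `P² = q e P` and `Q² = (1 + q) e Q`. Hence
`(Σ + L)^(j+1) = (q e)^j P + ((1 + q) e)^j Q`, and since `tr P = (1 + q) e` and
`tr Q = -(1 + q) e`, the trace is `((1 + q) q^j - (1 + q)^(j+1)) e^(j+1)`.
-/

section OrthogonalPow

variable {R A : Type*} [CommSemiring R] [Semiring A] [Algebra R A]

theorem pow_succ_eq_smul_of_mul_self_eq_smul {x : A} {a : R} (hx : x * x = a • x) (k : ℕ) :
    x ^ (k + 1) = a ^ k • x := by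
  induction k with
  | zero => simp
  | succ k ih => rw [pow_succ, ih, smul_mul_assoc, hx, smul_smul, pow_succ]

theorem add_pow_succ_of_mul_eq_zero {x y : A} (hxy : x * y = 0) (hyx : y * x = 0) (k : ℕ) :
    (x + y) ^ (k + 1) = x ^ (k + 1) + y ^ (k + 1) := by
  induction k with
  | zero => simp
  | succ k ih =>
    have hxy' : x * y ^ (k + 1) = 0 := by rw [pow_succ', ← mul_assoc, hxy, zero_mul]
    have hyx' : y * x ^ (k + 1) = 0 := by rw [pow_succ', ← mul_assoc, hyx, zero_mul]
    rw [pow_succ' (x + y), ih, add_mul, mul_add, mul_add, hxy', hyx', ← pow_succ', ← pow_succ',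
      add_zero, zero_add]

theorem add_pow_succ_of_orthogonal {x y : A} {a b : R} (hx : x * x = a • x)
    (hy : y * y = b • y) (hxy : x * y = 0) (hyx : y * x = 0) (k : ℕ) :
    (x + y) ^ (k + 1) = a ^ k • x + b ^ k • y := by
  rw [add_pow_succ_of_mul_eq_zero hxy hyx, pow_succ_eq_smul_of_mul_self_eq_smul hx,
    pow_succ_eq_smul_of_mul_self_eq_smul hy]

end OrthogonalPow

theorem add_pow_succ_of_mul_eq_smul {R A : Type*} [CommRing R] [Ring A] [Algebra R A]
    {x y : A} {c e : R} (hxx : x * x = (c * e) • x) (hxy : x * y = (c * e) • y)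
    (hyx : y * x = (c * e) • y) (hyy : y * y = e • y) (k : ℕ) :
    (x + y) ^ (k + 1) = (c * e) ^ k • (x - c • y) + ((1 + c) * e) ^ k • ((1 + c) • y) := by
  set P := x - c • y
  set Q := (1 + c) • y
  have hPP : P * P = (c * e) • P := by
    simp only [P, sub_mul, mul_sub, smul_mul_assoc, mul_smul_comm, hxx, hxy, hyx, hyy]
    module
  have hQQ : Q * Q = ((1 + c) * e) • Q := by
    simp only [Q, smul_mul_assoc, mul_smul_comm, hyy]
    module
  have hPQ : P * Q = 0 := by
    simp only [P, Q, sub_mul, mul_smul_comm, smul_mul_assoc, hxy, hyy]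
    module
  have hQP : Q * P = 0 := by
    simp only [P, Q, mul_sub, mul_smul_comm, smul_mul_assoc, hyx, hyy]
    module
  have hsum : x + y = P + Q := by module
  rw [hsum, add_pow_succ_of_orthogonal hPP hQQ hPQ hQP]

theorem reinhardt_coeff_eq (n j : ℕ) :
    ((n : ℚ) + 2) * (1 - ((n : ℚ) + 2) ^ j) / ((n : ℚ) + 1) ^ (j + 1)
      = (1 + 1 / ((n : ℚ) + 1)) * (1 / ((n : ℚ) + 1)) ^ j
        - (1 + 1 / ((n : ℚ) + 1)) ^ (j + 1) := by
  have h : 1 + 1 / ((n : ℚ) + 1) = ((n : ℚ) + 2) / ((n : ℚ) + 1) := by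
    field_simp
    ring
  rw [h, div_pow, div_pow, one_pow]
  field_simp
  ring

theorem trace_pow_add_of_reinhardt_relations_general (n : ℕ)
    {R : Type*} [CommRing R] [Algebra ℚ R]
    (e : R) (Sg L : Matrix (Fin n) (Fin n) R)
    (hSS : Sg * Sg = (1 / ((n : ℚ) + 1)) • (e • Sg))
    (hSL : Sg * L = (1 / ((n : ℚ) + 1)) • (e • L))
    (hLS : L * Sg = (1 / ((n : ℚ) + 1)) • (e • L))
    (hLL : L * L = e • L)
    (htrS : Matrix.trace Sg = e)
    (htrL : Matrix.trace L = -e) :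
    ∀ k : ℕ, 1 ≤ k →
      Matrix.trace ((Sg + L) ^ k) =
        ((((n : ℚ) + 2) * (1 - ((n : ℚ) + 2) ^ (k - 1))) / ((n : ℚ) + 1) ^ k) •
          e ^ k := by
  set c : R := algebraMap ℚ R (1 / ((n : ℚ) + 1))
  have hsmul (X : Matrix (Fin n) (Fin n) R) :
      (1 / ((n : ℚ) + 1)) • e • X = (c * e) • X := by
    rw [mul_smul, algebraMap_smul]
  rw [hsmul] at hSS hSL hLS
  intro k hk
  obtain ⟨j, rfl⟩ := Nat.exists_eq_add_of_le' hk
  rw [add_pow_succ_of_mul_eq_smul hSS hSL hLS hLL, Nat.add_sub_cancel, reinhardt_coeff_eq,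
    Algebra.smul_def _ (e ^ (j + 1))]
  simp only [Matrix.trace_add, Matrix.trace_smul, Matrix.trace_sub, htrS, htrL, smul_eq_mul,
    mul_pow, map_sub, map_mul, map_add, map_pow, map_one, c]
  ring

/-- the trace of `(Σ + L)^k` for matrices satisfying the
Reinhardt-domain curvature relations. -/
theorem trace_pow_add_of_reinhardt_relations (n : ℕ) (hn : 1 ≤ n)
    {R : Type*} [CommRing R] [Algebra ℚ R]
    (e : R) (Sg L : Matrix (Fin n) (Fin n) R)
    (hSS : Sg * Sg = (1 / ((n : ℚ) + 1)) • (e • Sg))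
    (hSL : Sg * L = (1 / ((n : ℚ) + 1)) • (e • L))
    (hLS : L * Sg = (1 / ((n : ℚ) + 1)) • (e • L))
    (hLL : L * L = e • L)
    (htrS : Matrix.trace Sg = e)
    (htrL : Matrix.trace L = -e) :
    ∀ k : ℕ, 1 ≤ k →
      Matrix.trace ((Sg + L) ^ k) =
        ((((n : ℚ) + 2) * (1 - ((n : ℚ) + 2) ^ (k - 1))) / ((n : ℚ) + 1) ^ k) •
          e ^ k :=
  trace_pow_add_of_reinhardt_relations_general n e Sg L hSS hSL hLS hLL htrS htrL
end

section
/- Let R be a commutative ring, n ≥ 1 a natural number, and let W, Ψ, M be square matrices over R (indexed by an arbitrary finite type) and c, d, q ∈ R with q·q = 0, satisfying: Ψ·Ψ = d • W − ((n+1)·c·d) • Ψ + ((n+1)·q) • M; Ψ·M = M·Ψ = −q • M; M·M = −(c·d) • M; W·Ψ = Ψ·W = −((n+1)·c·d) • W; W·W = 0; and W·M = M·W = 0. Then for every integer k ≥ 2, Ψ^k = ((−c)^{k−2}·d^{k−2}) • ( ((k−1)·(n+1)^{k−2}·d) • W − ((n+1)^{k−1}·c·d) • Ψ + ((n+1)^{k−1}·q)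 • M ). -/
/-- powers of `Ψ` for matrices satisfying the relations from the
perturbation of the round CR sphere. -/
theorem pow_Psi_of_sphere_relations {R : Type*} [CommRing R]
    (n : ℕ) (hn : 1 ≤ n) {ι : Type*} [Fintype ι] [DecidableEq ι]
    (W Ψ M : Matrix ι ι R) (c d q : R) (hq : q * q = 0)
    (hΨΨ : Ψ * Ψ = d • W - (((n : R) + 1) * c * d) • Ψ + (((n : R) + 1) * q) • M)
    (hΨM : Ψ * M = -(q • M)) (hMΨ : M * Ψ = -(q • M))
    (hMM : M * M = -((c * d) • M))
    (hWΨ : W * Ψ = -((((n : R) + 1) * c * d) • W))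
    (hΨW : Ψ * W = -((((n : R) + 1) * c * d) • W))
    (hWW : W * W = 0) (hWM : W * M = 0) (hMW : M * W = 0) :
    ∀ k : ℕ, 2 ≤ k →
      Ψ ^ k =
        ((-c) ^ (k - 2) * d ^ (k - 2)) •
          ((((k : R) - 1) * ((n : R) + 1) ^ (k - 2) * d) • W -
            (((n : R) + 1) ^ (k - 1) * c * d) • Ψ +
            (((n : R) + 1) ^ (k - 1) * q) • M) := by
  have aux : ∀ m : ℕ, Ψ ^ (m + 2) =
      ((-c) ^ m * d ^ m) •
        ((((m : R) + 1) * ((n : R) + 1) ^ m * d) • W -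
          (((n : R) + 1) ^ (m + 1) * c * d) • Ψ +
          (((n : R) + 1) ^ (m + 1) * q) • M) := by
    intro m
    induction m with
    | zero => rw [pow_two, hΨΨ]; match_scalars <;> ring
    | succ m ih =>
      have : Ψ ^ (m + 1 + 2) = Ψ ^ (m + 2) * Ψ := pow_succ Ψ (m + 2)
      rw [this, ih, smul_mul_assoc, add_mul, sub_mul, smul_mul_assoc,
        smul_mul_assoc, smul_mul_assoc, hWΨ, hΨΨ, hMΨ]
      match_scalars
      · push_cast; ring
      · push_cast; ring
      · push_cast; linear_combination (-(-c) ^ m * d ^ m * ((n : R) + 1) ^ (m + 1)) * hq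
  intro k hk
  obtain ⟨m, rfl⟩ := Nat.exists_eq_add_of_le hk
  have h2 : 2 + m - 2 = m := by omega
  have h1 : 2 + m - 1 = m + 1 := by omega
  rw [h2, h1, add_comm 2 m]
  have hc : ((m + 2 : ℕ) : R) - 1 = (m : R) + 1 := by push_cast; ring
  rw [hc]
  exact aux m
end

section
/- Let R be a commutative ring, n ≥ 1 a natural number, and let W, Ψ, M be square matrices over R (indexed by an arbitrary finite type) and c, d, q ∈ R with q·q = 0, satisfying: Ψ·Ψ = d • W − ((n+1)·c·d) • Ψ + ((n+1)·q) • M; Ψ·M = M·Ψ = −q • M; M·M = −(c·d) • M; W·Ψ = Ψ·W = −((n+1)·c·d) • W; W·W = 0; and W·M = M·W = 0. Then for every integer k ≥ 2, (Ψ + M)^k = ((−c)^{k−2}·d^{k−2}) • ( ((k−1)·(n+1)^{k−2}·d) • W − ((n+1)^{k−1}·c·d) • Ψ − (c·d) • M + (((n+1)^{k−1} − k)·q) • M ). -/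
/-- powers of `Ψ + M` for matrices satisfying the relations from the
perturbation of the round CR sphere. -/
theorem pow_Psi_add_M_of_sphere_relations {R : Type*} [CommRing R]
    (n : ℕ) (hn : 1 ≤ n) {ι : Type*} [Fintype ι] [DecidableEq ι]
    (W Ψ M : Matrix ι ι R) (c d q : R) (hq : q * q = 0)
    (hΨΨ : Ψ * Ψ = d • W - (((n : R) + 1) * c * d) • Ψ + (((n : R) + 1) * q) • M)
    (hΨM : Ψ * M = -(q • M)) (hMΨ : M * Ψ = -(q • M))
    (hMM : M * M = -((c * d) • M))
    (hWΨ : W * Ψ = -((((n : R) + 1) * c * d) • W))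
    (hΨW : Ψ * W = -((((n : R) + 1) * c * d) • W))
    (hWW : W * W = 0) (hWM : W * M = 0) (hMW : M * W = 0) :
    ∀ k : ℕ, 2 ≤ k →
      (Ψ + M) ^ k =
        ((-c) ^ (k - 2) * d ^ (k - 2)) •
          ((((k : R) - 1) * ((n : R) + 1) ^ (k - 2) * d) • W -
            (((n : R) + 1) ^ (k - 1) * c * d) • Ψ -
            (c * d) • M +
            ((((n : R) + 1) ^ (k - 1) - (k : R)) * q) • M) := by
  have key : ∀ m : ℕ, (Ψ + M) ^ (m + 2) =
      ((-c) ^ m * d ^ m) •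
        ((((m : R) + 2 - 1) * ((n : R) + 1) ^ m * d) • W -
          (((n : R) + 1) ^ (m + 1) * c * d) • Ψ -
          (c * d) • M +
          ((((n : R) + 1) ^ (m + 1) - ((m : R) + 2)) * q) • M) := by
    intro m
    induction m with
    | zero =>
        simp only [pow_zero, one_mul, Nat.cast_zero, zero_add, one_smul]
        rw [pow_two, add_mul, mul_add, mul_add, hΨΨ, hΨM, hMΨ, hMM]
        module
    | succ m ih =>
        rw [show m + 1 + 2 = (m + 2) + 1 by omega, pow_succ, ih]
        simp only [smul_mul_assoc, sub_mul, add_mul, mul_add,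
          hΨΨ, hΨM, hMΨ, hMM, hWΨ, hWM]
        push_cast
        match_scalars
        · ring
        · ring
        · linear_combination ((-1 : R) ^ m * c ^ m * d ^ m *
            ((m : R) + 2 - ((n : R) + 1) ^ (m + 1))) * hq
  intro k hk
  obtain ⟨m, rfl⟩ := Nat.exists_eq_add_of_le hk
  have h2 : 2 + m - 2 = m := by omega
  have h1 : 2 + m - 1 = m + 1 := by omega
  rw [h2, h1, show 2 + m = m + 2 by omega, key m]
  push_cast
  ring_nf
end

section
/- Let R be a commutative ℚ-algebra, n ≥ 1 a natural number, and let W, Ψ, M be square matrices over R (indexed by an arbitrary finite type) and c, d, q ∈ R with q·q = 0, satisfying: Ψ·Ψ = d • W − ((n+1)·c·d) • Ψ + ((n+1)·q) • M; Ψ·M = M·Ψ = −q • M; M·M = −(c·d) • M; W·Ψ = Ψ·W = −((n+1)·c·d) • W; W·W = 0; W·M = M·W = 0; q • Ψ = d • W; and q • W = 0. Set 𝒫 := Ψ + M + (q + c·d) • 1, where 1 is the identity matrix. Then for every integer k ≥ 2, 𝒫^k = (c^{k−2}·d^{k−2}) • ( (c²·d²) • 1 + (k·c·q·d) • 1 −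 ((((−n)^k − 1)/(n+1))·c·d) • Ψ + (c·d) • M + ((((−n)^k − 1 + k·(n+1))/(n+1))·q) • M + ((k·(1 − 2·(−n)^{k−1})/(n+1) + (1 − (−n)^k)/(n+1)²)·d) • W ). -/
/-- powers of the matrix `𝒫 = Ψ + M + (q + c·d) • 1` for matrices
satisfying the relations from the perturbation of the round CR sphere. -/
theorem pow_P_of_sphere_relations {R : Type*} [CommRing R] [Algebra ℚ R]
    (n : ℕ) (hn : 1 ≤ n) {ι : Type*} [Fintype ι] [DecidableEq ι]
    (W Ψ M : Matrix ι ι R) (c d q : R) (hq : q * q = 0)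
    (hΨΨ : Ψ * Ψ = d • W - (((n : R) + 1) * c * d) • Ψ + (((n : R) + 1) * q) • M)
    (hΨM : Ψ * M = -(q • M)) (hMΨ : M * Ψ = -(q • M))
    (hMM : M * M = -((c * d) • M))
    (hWΨ : W * Ψ = -((((n : R) + 1) * c * d) • W))
    (hΨW : Ψ * W = -((((n : R) + 1) * c * d) • W))
    (hWW : W * W = 0) (hWM : W * M = 0) (hMW : M * W = 0)
    (hqΨ : q • Ψ = d • W) (hqW : q • W = 0)
    (P : Matrix ι ι R)
    (hP : P = Ψ + M + (q + c * d) • (1 : Matrix ι ι R)) :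
    ∀ k : ℕ, 2 ≤ k →
      P ^ k =
        (c ^ (k - 2) * d ^ (k - 2)) •
          ((c ^ 2 * d ^ 2) • (1 : Matrix ι ι R) +
            ((k : R) * c * q * d) • (1 : Matrix ι ι R) -
            ((((-(n : ℚ)) ^ k - 1) / ((n : ℚ) + 1)) • (c * d)) • Ψ +
            (c * d) • M +
            ((((-(n : ℚ)) ^ k - 1 + (k : ℚ) * ((n : ℚ) + 1)) / ((n : ℚ) + 1)) • q) • M +
            ((((k : ℚ) * (1 - 2 * (-(n : ℚ)) ^ (k - 1)) / ((n : ℚ) + 1) +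
                (1 - (-(n : ℚ)) ^ k) / ((n : ℚ) + 1) ^ 2)) • d) • W) := by
  have hn0 : ((n:ℚ)+1) ≠ 0 := by positivity
  have hΨP : Ψ * P = (-((n:R)*(c*d))) • Ψ + ((n:R)*q) • M + (2*d) • W := by
    rw [hP, mul_add, mul_add, hΨΨ, hΨM, Matrix.mul_smul, mul_one, add_smul, hqΨ]
    module
  have hMP : M * P = 0 := by
    rw [hP, mul_add, mul_add, hMΨ, hMM, Matrix.mul_smul, mul_one]
    module
  have hWP : W * P = (-((n:R)*(c*d))) • W := by
    rw [hP, mul_add, mul_add, hWΨ, hWM, Matrix.mul_smul, mul_one, add_smul, hqW]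
    module
  have key : ∀ m : ℕ, P ^ (m+2) =
      ((c*d)^(m+2) + ((m+2:ℕ):R) * q * (c*d)^(m+1)) • (1 : Matrix ι ι R)
      + (algebraMap ℚ R ((1 - (-(n:ℚ))^(m+2))/((n:ℚ)+1)) * (c*d)^(m+1)) • Ψ
      + ((c*d)^(m+1) + algebraMap ℚ R (((-(n:ℚ))^(m+2) - 1 + ((m+2:ℕ):ℚ)*((n:ℚ)+1))/((n:ℚ)+1)) * q * (c*d)^m) • M
      + (algebraMap ℚ R (((m+2:ℕ):ℚ) * (1 - 2*(-(n:ℚ))^(m+1))/((n:ℚ)+1) + (1 - (-(n:ℚ))^(m+2))/((n:ℚ)+1)^2) * d * (c*d)^m) • W := by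
    intro m
    induction m with
    | zero =>
      have h2 : P ^ (0+2) = P * P := sq P
      rw [h2]
      nth_rewrite 1 [hP]
      rw [add_mul, add_mul, hΨP, hMP, smul_mul_assoc, one_mul, hP]
      have e1 : ((1 - (-(n:ℚ))^(0+2))/((n:ℚ)+1)) = 1 - (n:ℚ) := by field_simp; ring
      have e2 : (((-(n:ℚ))^(0+2) - 1 + ((0+2:ℕ):ℚ)*((n:ℚ)+1))/((n:ℚ)+1)) = (n:ℚ) + 1 := by
        field_simp; ring
      have e3 : (((0+2:ℕ):ℚ) * (1 - 2*(-(n:ℚ))^(0+1))/((n:ℚ)+1) + (1 - (-(n:ℚ))^(0+2))/((n:ℚ)+1)^2) = 3 := by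
        field_simp; ring
      rw [e1, e2, e3]
      simp only [map_sub, map_one, map_natCast, map_add, map_ofNat]
      rw [smul_add, smul_add, add_smul q (c*d) Ψ, hqΨ]
      match_scalars <;>
        first
          | ring1
          | linear_combination hq
          | linear_combination -hq
    | succ m ih =>
      have htr : ∀ r s : R, (r * q * s) • Ψ = (r * d * s) • W := by
        intro r s
        rw [show r*q*s = (r*s)*q by ring, mul_smul, hqΨ, ← mul_smul, show r*s*d = r*d*s by ring]
      have hb : (1 - (-(n:ℚ))^(m+1+2))/((n:ℚ)+1)
          = 1 - (n:ℚ) * ((1 - (-(n:ℚ))^(m+2))/((n:ℚ)+1)) := by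
        field_simp; ring
      have hg : ((-(n:ℚ))^(m+1+2) - 1 + ((m+1+2:ℕ):ℚ)*((n:ℚ)+1))/((n:ℚ)+1)
          = ((m+2:ℕ):ℚ) + (n:ℚ)*((1 - (-(n:ℚ))^(m+2))/((n:ℚ)+1)) := by
        push_cast; field_simp; ring
      have hd : ((m+1+2:ℕ):ℚ)*(1 - 2*(-(n:ℚ))^(m+1+1))/((n:ℚ)+1) + (1 - (-(n:ℚ))^(m+1+2))/((n:ℚ)+1)^2
          = ((m+2:ℕ):ℚ) + 2*((1 - (-(n:ℚ))^(m+2))/((n:ℚ)+1))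
            - (n:ℚ)*(((m+2:ℕ):ℚ)*(1 - 2*(-(n:ℚ))^(m+1))/((n:ℚ)+1) + (1 - (-(n:ℚ))^(m+2))/((n:ℚ)+1)^2) := by
        push_cast; field_simp; ring
      rw [show m+1+2 = (m+2)+1 from rfl, pow_succ, ih, hb, hg, hd]
      rw [add_mul, add_mul, add_mul, smul_mul_assoc, smul_mul_assoc, smul_mul_assoc,
        smul_mul_assoc, one_mul, hΨP, hMP, hWP, hP]
      rw [smul_add, smul_add, add_smul ((c*d)^(m+2)) (((m+2:ℕ):R) * q * (c*d)^(m+1)) Ψ, htr]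
      simp only [map_add, map_sub, map_one, map_mul, map_natCast, map_ofNat]
      push_cast
      match_scalars <;>
        first
          | ring1
          | linear_combination (((m:R)+2)*(c*d)^(m+1))*hq
          | linear_combination (-((m:R)+2)*(c*d)^(m+1))*hq
  intro k hk
  obtain ⟨m, rfl⟩ : ∃ m, k = m + 2 := ⟨k - 2, by omega⟩
  rw [key m]
  simp only [show m+2-2 = m from rfl, show m+2-1 = m+1 from rfl]
  have hneg : ((-(n:ℚ))^(m+2) - 1)/((n:ℚ)+1) = -((1 - (-(n:ℚ))^(m+2))/((n:ℚ)+1)) := by ring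
  rw [hneg]
  have hsd : ∀ (x : ℚ) (r : R), x • r = algebraMap ℚ R x * r := fun x r => Algebra.smul_def x r
  simp only [hsd, map_neg]
  match_scalars <;> ring1
end

section
/- Let R be a commutative ℚ-algebra, n ≥ 1 a natural number, and let W, Ψ, M be square matrices over R (indexed by an arbitrary finite type) and c, d, q ∈ R with q·q = 0, satisfying: Ψ·Ψ = d • W − ((n+1)·c·d) • Ψ + ((n+1)·q) • M; Ψ·M = M·Ψ = −q • M; M·M = −(c·d) • M; W·Ψ = Ψ·W = −((n+1)·c·d) • W; W·W = 0; W·M = M·W = 0; q • Ψ = d • W; and q • W = 0. Set 𝒫 := Ψ + M + (q + c·d) • 1 and Ċ := W + (((n+1)/(n+2))·c) • 𝒫. Then for every integer k ≥ 2, Ċ^k = (((n+1)/(n+2))^{k−1}·c^{2k−2}·d^{k−2}) • ( (((n+1)/(n+2))·c²·d²) • 1 + (((n+1)/(n+2))·c·d) • M + (((n+1)/(n+2))·k·c·q·d) • 1 − ((((−n)^k − 1)/(n+2))·c·d) • Ψ + ((((−n)^k − 1 + k·(n+1))/(n+2))·q) • M + ((((k·(n+1) + 1)·(1 − (−n)^k))/((n+1)·(n+2)))·d)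 • W ). -/
noncomputable def sQ (n : ℕ) : ℚ := ((n:ℚ)+1)/((n:ℚ)+2)
noncomputable def uQ (n k : ℕ) : ℚ := ((-(n:ℚ))^k - 1)/((n:ℚ)+2)
noncomputable def vQ (n k : ℕ) : ℚ := ((-(n:ℚ))^k - 1 + (k:ℚ)*((n:ℚ)+1))/((n:ℚ)+2)
noncomputable def wQ (n k : ℕ) : ℚ := ((k:ℚ)*((n:ℚ)+1)+1)*(1-(-(n:ℚ))^k)/(((n:ℚ)+1)*((n:ℚ)+2))

lemma uQ2 (n : ℕ) : uQ n 2 = sQ n * ((n:ℚ)-1) := by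
  simp only [uQ, sQ]; field_simp; ring
lemma vQ2 (n : ℕ) : vQ n 2 = sQ n * ((n:ℚ)+1) := by
  simp only [vQ, sQ]; field_simp; ring
lemma wQ2 (n : ℕ) : wQ n 2 = 3 * sQ n - 2*(n:ℚ) := by
  simp only [wQ, sQ]; rw [div_eq_iff (by positivity)]; field_simp; ring
lemma uQrec (n k : ℕ) : uQ n (k+1) = -(n:ℚ) * uQ n k - sQ n := by
  simp only [uQ, sQ]; rw [pow_succ]; field_simp; ring
lemma vQrec (n k : ℕ) : vQ n (k+1) = (k:ℚ) * sQ n - (n:ℚ) * uQ n k := by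
  simp only [vQ, uQ, sQ]; rw [pow_succ]; push_cast; field_simp; ring
lemma wQrec (n k : ℕ) : sQ n * wQ n (k+1) =
    sQ n - uQ n k * (sQ n - (n:ℚ) - 1) - (n:ℚ) * sQ n * wQ n k + (k:ℚ) * sQ n ^2 - uQ n k * sQ n := by
  simp only [wQ, uQ, sQ]; rw [pow_succ]; push_cast; field_simp; ring

section
variable {R : Type*} [CommRing R] {ι : Type*} [Fintype ι] [DecidableEq ι]

lemma step_mul (W Ψ M C : Matrix ι ι R) (t A q c d : R)
    (hΨC : Ψ * C = (t*q + t*c*d - t*A*c*d) • Ψ + (t*A*q - t*q) • M + (t*d - A*c*d) • W)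
    (hMC : M * C = 0)
    (hWC : W * C = (t*c*d - t*A*c*d) • W)
    (hCform : C = (t*q + t*c*d) • (1 : Matrix ι ι R) + t • Ψ + t • M + W)
    (a b e f : R) :
    (a • (1:Matrix ι ι R) + b • Ψ + e • M + f • W) * C =
      (a*(t*q + t*c*d)) • (1:Matrix ι ι R)
      + (a*t + b*(t*q + t*c*d - t*A*c*d)) • Ψ
      + (a*t + b*(t*A*q - t*q)) • M
      + (a + b*(t*d - A*c*d) + f*(t*c*d - t*A*c*d)) • W := by
  simp only [add_mul, smul_mul_assoc, one_mul, hΨC, hMC, hWC]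
  rw [hCform]
  module

lemma comb_congr (q d : R) (W Ψ M : Matrix ι ι R) (hqΨ : q • Ψ = d • W) (hqW : q • W = 0)
    (a b e f a' b' e' f' x y : R)
    (ha : a = a') (hb : b = b' + x*q) (he : e = e') (hf : f + x*d = f' + y*q) :
    a • (1:Matrix ι ι R) + b • Ψ + e • M + f • W
      = a' • (1:Matrix ι ι R) + b' • Ψ + e' • M + f' • W := by
  subst ha he
  have hf' : f = f' + y*q - x*d := by linear_combination hf
  subst hb hf'
  have h1 : (x*q) • Ψ = (x*d) • W := by rw [mul_smul, hqΨ, mul_smul]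
  have h2 : (y*q) • W = 0 := by rw [mul_smul, hqW, smul_zero]
  rw [add_smul, h1, sub_smul, add_smul, h2]
  abel

end

theorem pow_Cdot_of_sphere_relations {R : Type*} [CommRing R] [Algebra ℚ R]
    (n : ℕ) (hn : 1 ≤ n) {ι : Type*} [Fintype ι] [DecidableEq ι]
    (W Ψ M : Matrix ι ι R) (c d q : R) (hq : q * q = 0)
    (hΨΨ : Ψ * Ψ = d • W - (((n : R) + 1) * c * d) • Ψ + (((n : R) + 1) * q) • M)
    (hΨM : Ψ * M = -(q • M)) (hMΨ : M * Ψ = -(q • M))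
    (hMM : M * M = -((c * d) • M))
    (hWΨ : W * Ψ = -((((n : R) + 1) * c * d) • W))
    (hΨW : Ψ * W = -((((n : R) + 1) * c * d) • W))
    (hWW : W * W = 0) (hWM : W * M = 0) (hMW : M * W = 0)
    (hqΨ : q • Ψ = d • W) (hqW : q • W = 0)
    (P C : Matrix ι ι R)
    (hP : P = Ψ + M + (q + c * d) • (1 : Matrix ι ι R))
    (hC : C = W + ((((n : ℚ) + 1) / ((n : ℚ) + 2)) • c) • P) :
    ∀ k : ℕ, 2 ≤ k →
      C ^ k =
        (((((n : ℚ) + 1) / ((n : ℚ) + 2)) ^ (k - 1)) •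
            (c ^ (2 * k - 2) * d ^ (k - 2))) •
          (((((n : ℚ) + 1) / ((n : ℚ) + 2)) • (c ^ 2 * d ^ 2)) • (1 : Matrix ι ι R) +
            ((((n : ℚ) + 1) / ((n : ℚ) + 2)) • (c * d)) • M +
            ((((n : ℚ) + 1) / ((n : ℚ) + 2)) • ((k : R) * c * q * d)) • (1 : Matrix ι ι R) -
            ((((-(n : ℚ)) ^ k - 1) / ((n : ℚ) + 2)) • (c * d)) • Ψ +
            ((((-(n : ℚ)) ^ k - 1 + (k : ℚ) * ((n : ℚ) + 1)) / ((n : ℚ) + 2)) • q) • M +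
            ((((k : ℚ) * ((n : ℚ) + 1) + 1) * (1 - (-(n : ℚ)) ^ k) /
                (((n : ℚ) + 1) * ((n : ℚ) + 2))) • d) • W) := by
  set S : R := algebraMap ℚ R (sQ n) with hS
  set U : ℕ → R := fun k => algebraMap ℚ R (uQ n k) with hU
  set V : ℕ → R := fun k => algebraMap ℚ R (vQ n k) with hV
  set G : ℕ → R := fun k => algebraMap ℚ R (wQ n k) with hG
  -- mapped rational identities
  have hu2R : U 2 = S * ((n:R)-1) := by
    rw [hU, hS]
    have := congrArg (algebraMap ℚ R) (uQ2 n)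
    simpa using this
  have hv2R : V 2 = S * ((n:R)+1) := by
    rw [hV, hS]
    have := congrArg (algebraMap ℚ R) (vQ2 n)
    simpa using this
  have hw2R : G 2 = 3 * S - 2*(n:R) := by
    rw [hG, hS]
    have := congrArg (algebraMap ℚ R) (wQ2 n)
    simpa [map_ofNat] using this
  have huR : ∀ k, U (k+1) = -(n:R) * U k - S := by
    intro k
    rw [hU, hS]
    have := congrArg (algebraMap ℚ R) (uQrec n k)
    simpa using this
  have hvR : ∀ k, V (k+1) = (k:R) * S - (n:R) * U k := by
    intro k
    rw [hV, hU, hS]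
    have := congrArg (algebraMap ℚ R) (vQrec n k)
    simpa using this
  have hwR : ∀ k, S * G (k+1) =
      S - U k * (S - (n:R) - 1) - (n:R) * S * G k + (k:R) * S^2 - U k * S := by
    intro k
    rw [hG, hU, hS]
    have := congrArg (algebraMap ℚ R) (wQrec n k)
    simpa using this
  -- the matrix C in combination form
  have hsc : ((((n:ℚ)+1)/((n:ℚ)+2)) • c) = S * c := by
    rw [hS, sQ, Algebra.smul_def]
  have hCform : C = (S*c*q + S*c*c*d) • (1 : Matrix ι ι R) + (S*c) • Ψ + (S*c) • M + W := by
    rw [hC, hP, hsc]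
    module
  have hxqW : ∀ x : R, (x*q) • W = 0 := fun x => by rw [mul_smul, hqW, smul_zero]
  -- products with C
  have hΨC : Ψ * C = ((S*c)*q + (S*c)*c*d - (S*c)*((n:R)+1)*c*d) • Ψ
      + ((S*c)*((n:R)+1)*q - (S*c)*q) • M + ((S*c)*d - ((n:R)+1)*c*d) • W := by
    rw [hCform]
    simp only [mul_add, mul_smul_comm, mul_one, hΨΨ, hΨM, hΨW]
    module
  have hMC : M * C = 0 := by
    rw [hCform]
    simp only [mul_add, mul_smul_comm, mul_one, hMΨ, hMM, hMW]
    module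
  have hWC : W * C = ((S*c)*c*d - (S*c)*((n:R)+1)*c*d) • W := by
    rw [hCform]
    simp only [mul_add, mul_smul_comm, mul_one, hWΨ, hWM, hWW]
    rw [add_smul, hxqW]
    module
  have step := step_mul W Ψ M C (S*c) ((n:R)+1) q c d hΨC hMC hWC
    (by rw [hCform])
  -- the key induction
  have key : ∀ m : ℕ, C ^ (m+2) =
      (S^(m+2) * c^(2*m+4) * d^(m+2) + ((m:R)+2) * S^(m+2) * c^(2*m+3) * d^(m+1) * q)
          • (1 : Matrix ι ι R)
      + (-(U (m+2) * S^(m+1) * c^(2*m+3) * d^(m+1))) • Ψ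
      + (S^(m+2) * c^(2*m+3) * d^(m+1) + V (m+2) * S^(m+1) * c^(2*m+2) * d^m * q) • M
      + (G (m+2) * S^(m+1) * c^(2*m+2) * d^(m+1)) • W := by
    intro m
    induction m with
    | zero =>
      have h2 : C ^ (0+2) = ((S*c*q + S*c*c*d) • (1 : Matrix ι ι R)
          + (S*c) • Ψ + (S*c) • M + (1:R) • W) * C := by
        rw [pow_two]
        nth_rewrite 1 [hCform]
        rw [one_smul]
      rw [h2, step]
      refine comb_congr q d W Ψ M hqΨ hqW _ _ _ _ _ _ _ _
        (2*S^2*c^2) (S*c) ?_ ?_ ?_ ?_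
      · push_cast
        linear_combination (S^2*c^2) * hq
      · push_cast
        linear_combination (S*c^3*d) * hu2R
      · push_cast
        linear_combination (-(S*c^2*q)) * hv2R
      · push_cast
        linear_combination (-(S*c^2*d)) * hw2R
    | succ m ih =>
      have hstep : C ^ (m+1+2) = C ^ (m+2) * C := by rw [← pow_succ]
      rw [hstep, ih, step]
      have hu' := huR (m+2)
      have hv' := hvR (m+2)
      have hw' := hwR (m+2)
      push_cast at hv' hw'
      refine comb_congr q d W Ψ M hqΨ hqW _ _ _ _ _ _ _ _
        (((m:R)+2) * S^(m+3) * c^(2*m+4) * d^(m+1) - U (m+2) * S^(m+2) * c^(2*m+4) * d^(m+1))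
        (((m:R)+2) * S^(m+2) * c^(2*m+3) * d^(m+1)) ?_ ?_ ?_ ?_
      · push_cast
        linear_combination (((m:R)+2) * S^(m+3) * c^(2*m+4) * d^(m+1)) * hq
      · push_cast
        linear_combination (S^(m+2) * c^(2*m+5) * d^(m+2)) * hu'
      · push_cast
        linear_combination (-(S^(m+2) * c^(2*m+4) * d^(m+1) * q)) * hv'
      · push_cast
        linear_combination (-(S^(m+1) * c^(2*m+4) * d^(m+2))) * hw'
  -- conclude
  intro k hk
  obtain ⟨m, rfl⟩ : ∃ m, k = m + 2 := ⟨k - 2, by omega⟩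
  rw [key m]
  simp only [show m+2-1 = m+1 from rfl, show m+2-2 = m from rfl,
    show 2*(m+2)-2 = 2*m+2 from by omega]
  match_scalars
  · push_cast
    simp only [hU, hV, hG, hS, uQ, vQ, wQ, sQ, Algebra.smul_def, map_pow]
    push_cast
    ring
  · simp only [hU, hV, hG, hS, uQ, vQ, wQ, sQ, Algebra.smul_def, map_pow]
    push_cast
    ring
  · simp only [hU, hV, hG, hS, uQ, vQ, wQ, sQ, Algebra.smul_def, map_pow]
    push_cast
    ring
  · simp only [hU, hV, hG, hS, uQ, vQ, wQ, sQ, Algebra.smul_def, map_pow]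
    push_cast
    ring
end

section
/- Let R be a commutative ℚ-algebra, n ≥ 1 a natural number, and let W, Ψ, M be n × n matrices over R (indexed by Fin n) and c, d, q ∈ R with q·q = 0, satisfying: Ψ·Ψ = d • W − ((n+1)·c·d) • Ψ + ((n+1)·q) • M; Ψ·M = M·Ψ = −q • M; M·M = −(c·d) • M; W·Ψ = Ψ·W = −((n+1)·c·d) • W; W·W = 0; W·M = M·W = 0; q • Ψ = d • W; q • W = 0; trace W = −(n+1)·c·q; trace M = c·d; and trace Ψ = −(n+1)·c·d + 2·q. Set 𝒫 := Ψ + M + (q + c·d) • 1 and Ċ := W + (((n+1)/(n+2))·c) • 𝒫. Then for every integer k ≥ 1, trace(Ċ^k) = (((n+1)/(n+2))^k · ((n : ℤ) + (−n)^k)) • ( c^{2k−1} · (c·d + k·q) · d^{k−1} ). -/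
/-- the trace of `Ċ^k` for `n × n` matrices satisfying the relations
from the perturbation of the round CR sphere. -/
theorem trace_pow_Cdot_of_sphere_relations {R : Type*} [CommRing R] [Algebra ℚ R]
    (n : ℕ) (hn : 1 ≤ n)
    (W Ψ M : Matrix (Fin n) (Fin n) R) (c d q : R) (hq : q * q = 0)
    (hΨΨ : Ψ * Ψ = d • W - (((n : R) + 1) * c * d) • Ψ + (((n : R) + 1) * q) • M)
    (hΨM : Ψ * M = -(q • M)) (hMΨ : M * Ψ = -(q • M))
    (hMM : M * M = -((c * d) • M))
    (hWΨ : W * Ψ = -((((n : R) + 1) * c * d) • W))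
    (hΨW : Ψ * W = -((((n : R) + 1) * c * d) • W))
    (hWW : W * W = 0) (hWM : W * M = 0) (hMW : M * W = 0)
    (hqΨ : q • Ψ = d • W) (hqW : q • W = 0)
    (htrW : Matrix.trace W = -(((n : R) + 1) * c * q))
    (htrM : Matrix.trace M = c * d)
    (htrΨ : Matrix.trace Ψ = -(((n : R) + 1) * c * d) + 2 * q)
    (P C : Matrix (Fin n) (Fin n) R)
    (hP : P = Ψ + M + (q + c * d) • (1 : Matrix (Fin n) (Fin n) R))
    (hC : C = W + ((((n : ℚ) + 1) / ((n : ℚ) + 2)) • c) • P) :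
    ∀ k : ℕ, 1 ≤ k →
      Matrix.trace (C ^ k) =
        (((((n : ℚ) + 1) / ((n : ℚ) + 2)) ^ k *
            (((n : ℤ) + (-(n : ℤ)) ^ k : ℤ) : ℚ)) •
          (c ^ (2 * k - 1) * (c * d + (k : R) * q) * d ^ (k - 1))) := by
  obtain ⟨r, hr⟩ : ∃ r : ℚ, r = ((n : ℚ) + 1) / ((n : ℚ) + 2) := ⟨_, rfl⟩
  obtain ⟨b, hb⟩ : ∃ b : R, b = r • c := ⟨_, rfl⟩
  rw [← hr, ← hb] at hC
  rw [show (∀ k : ℕ, 1 ≤ k →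
      Matrix.trace (C ^ k) =
        (((((n : ℚ) + 1) / ((n : ℚ) + 2)) ^ k *
            (((n : ℤ) + (-(n : ℤ)) ^ k : ℤ) : ℚ)) •
          (c ^ (2 * k - 1) * (c * d + (k : R) * q) * d ^ (k - 1)))) =
      (∀ k : ℕ, 1 ≤ k →
      Matrix.trace (C ^ k) =
        ((r ^ k * (((n : ℤ) + (-(n : ℤ)) ^ k : ℤ) : ℚ)) •
          (c ^ (2 * k - 1) * (c * d + (k : R) * q) * d ^ (k - 1)))) from by rw [hr]]
  -- key scalar relation
  have hn2 : ((n : ℚ) + 2) ≠ 0 := by positivity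
  have hkey : ((n : R) + 2) * b = ((n : R) + 1) * c := by
    rw [hb, hr, mul_smul_comm, Algebra.smul_def]
    have h1 : ((n : R) + 2) = algebraMap ℚ R ((n : ℚ) + 2) := by
      simp [map_ofNat]
    have h2 : ((n : R) + 1) = algebraMap ℚ R ((n : ℚ) + 1) := by
      simp
    rw [h1, h2, ← mul_assoc, ← map_mul, div_mul_cancel₀ _ hn2]
  -- basis products
  have hWP : W * P = (-((n : R) * c * d)) • W := by
    have h1 : (q + c * d) • W = (c * d) • W := by
      rw [add_smul, hqW, zero_add]
    rw [hP, mul_add, mul_add, hWΨ, hWM, mul_smul_comm, mul_one, h1]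
    module
  have hPW : P * W = (-((n : R) * c * d)) • W := by
    have h1 : (q + c * d) • W = (c * d) • W := by
      rw [add_smul, hqW, zero_add]
    rw [hP, add_mul, add_mul, hΨW, hMW, smul_mul_assoc, one_mul, h1]
    module
  have hsq : (q + c * d) * (q + c * d) = 2 * q * c * d + c ^ 2 * d ^ 2 := by
    linear_combination hq
  have hqΨ' : (q + c * d) • Ψ = d • W + (c * d) • Ψ := by
    rw [add_smul, hqΨ]
  have hPP : P * P = (3 * d) • W + ((1 - (n : R)) * c * d) • Ψ +
      (((n : R) + 1) * q + c * d) • M +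
      (2 * q * c * d + c ^ 2 * d ^ 2) • (1 : Matrix (Fin n) (Fin n) R) := by
    rw [hP]
    rw [add_mul, add_mul, mul_add, mul_add, mul_add, mul_add, mul_add, mul_add]
    rw [hΨΨ, hΨM, hMΨ, hMM]
    rw [smul_mul_assoc, one_mul, smul_mul_assoc, one_mul,
      mul_smul_comm, mul_one, mul_smul_comm, mul_one,
      smul_mul_assoc, one_mul, smul_smul, hsq, hqΨ']
    module
  -- M * C = 0
  have hMC : M * C = 0 := by
    have hMP : M * P = 0 := by
      rw [hP, mul_add, mul_add, hMΨ, hMM, mul_smul_comm, mul_one, add_smul]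
      module
    rw [hC, mul_add, hMW, mul_smul_comm, hMP, smul_zero, add_zero]
  -- the quadratic identity for C
  have hCC : C * C = ((1 - (n : R)) * (b * (q + c * d))) • C +
      ((n : R) * ((b * (q + c * d)) * (b * (q + c * d)))) • (1 : Matrix (Fin n) (Fin n) R) +
      ((n : R) * (b * b) * (2 * q + c * d)) • M := by
    have hL : C * C = (3 * (b * b) * d - 2 * (n : R) * b * c * d) • W +
        ((1 - (n : R)) * (b * b) * c * d) • Ψ +
        ((b * b) * (((n : R) + 1) * q + c * d)) • M +
        ((b * b) * (2 * q * c * d + c ^ 2 * d ^ 2)) • (1 : Matrix (Fin n) (Fin n) R) := by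
      rw [hC, add_mul, mul_add, mul_add, hWW, smul_mul_assoc, mul_smul_comm,
        smul_mul_smul_comm, hWP, hPW, hPP]
      module
    have e1 : ((1 - (n : R)) * (b * (q + c * d))) • W
        = ((1 - (n : R)) * b * c * d) • W := by
      have h : ((1 - (n : R)) * (b * (q + c * d))) • W
          = ((1 - (n : R)) * b * c * d) • W + ((1 - (n : R)) * b) • (q • W) := by
        module
      rw [h, hqW, smul_zero, add_zero]
    have e2 : ((1 - (n : R)) * (b * (q + c * d)) * b) • Ψ
        = ((1 - (n : R)) * (b * b) * d) • W + ((1 - (n : R)) * (b * b) * c * d) • Ψ := by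
      have h : ((1 - (n : R)) * (b * (q + c * d)) * b) • Ψ
          = ((1 - (n : R)) * (b * b) * c * d) • Ψ + ((1 - (n : R)) * (b * b)) • (q • Ψ) := by
        module
      rw [h, hqΨ]
      module
    have hR : ((1 - (n : R)) * (b * (q + c * d))) • C +
        ((n : R) * ((b * (q + c * d)) * (b * (q + c * d)))) • (1 : Matrix (Fin n) (Fin n) R) +
        ((n : R) * (b * b) * (2 * q + c * d)) • M
        = (((1 - (n : R)) * b * c * d) + (1 - (n : R)) * (b * b) * d) • W +
          ((1 - (n : R)) * (b * b) * c * d) • Ψ +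
          (((1 - (n : R)) * (b * (q + c * d)) * b) + (n : R) * (b * b) * (2 * q + c * d)) • M +
          (((1 - (n : R)) * (b * (q + c * d)) * b * (q + c * d)) +
            (n : R) * ((b * (q + c * d)) * (b * (q + c * d)))) • (1 : Matrix (Fin n) (Fin n) R) := by
      rw [hC, hP]
      have h : ((1 - (n : R)) * (b * (q + c * d))) • (W + b • (Ψ + M + (q + c * d) • (1 : Matrix (Fin n) (Fin n) R)))
          = ((1 - (n : R)) * (b * (q + c * d))) • W +
            ((1 - (n : R)) * (b * (q + c * d)) * b) • Ψ +
            ((1 - (n : R)) * (b * (q + c * d)) * b) • M +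
            ((1 - (n : R)) * (b * (q + c * d)) * b * (q + c * d)) • (1 : Matrix (Fin n) (Fin n) R) := by
        module
      rw [h, e1, e2]
      module
    rw [hL, hR]
    have c1 : ((1 - (n : R)) * b * c * d) + (1 - (n : R)) * (b * b) * d
        = 3 * (b * b) * d - 2 * (n : R) * b * c * d := by
      linear_combination (-(b * d)) * hkey
    have c2 : ((1 - (n : R)) * (b * (q + c * d)) * b) + (n : R) * (b * b) * (2 * q + c * d)
        = (b * b) * (((n : R) + 1) * q + c * d) := by ring
    have c3 : ((1 - (n : R)) * (b * (q + c * d)) * b * (q + c * d)) +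
        (n : R) * ((b * (q + c * d)) * (b * (q + c * d)))
        = (b * b) * (2 * q * c * d + c ^ 2 * d ^ 2) := by
      linear_combination (b * b) * hq
    rw [c1, c2, c3]
  -- traces
  have htr1 : Matrix.trace (1 : Matrix (Fin n) (Fin n) R) = (n : R) := by
    simp [Matrix.trace_one]
  have htrC : Matrix.trace C = 0 := by
    rw [hC, hP]
    simp only [Matrix.trace_add, Matrix.trace_smul, htr1, htrW, htrΨ, htrM, smul_eq_mul]
    linear_combination q * hkey
  have htrC2 : Matrix.trace (C * C) = (n : R) * ((n : R) + 1) *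
      ((b * (q + c * d)) * (b * (q + c * d))) := by
    rw [hCC]
    simp only [Matrix.trace_add, Matrix.trace_smul, htr1, htrC, htrM, smul_eq_mul]
    linear_combination (-(n : R) * (b * b)) * hq
  -- recurrence
  have hrec : ∀ j : ℕ, C ^ (j + 3) =
      ((1 - (n : R)) * (b * (q + c * d))) • C ^ (j + 2) +
      ((n : R) * ((b * (q + c * d)) * (b * (q + c * d)))) • C ^ (j + 1) := by
    intro j
    have h3 : j + 3 = 2 + (j + 1) := by omega
    have hM0 : M * C ^ (j + 1) = 0 := by
      rw [pow_succ', ← mul_assoc, hMC, zero_mul]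
    rw [h3, pow_add, sq, hCC, add_mul, add_mul, smul_mul_assoc, smul_mul_assoc,
      smul_mul_assoc, one_mul, hM0, smul_zero, add_zero, ← pow_succ']
  -- trace of powers, two-step induction
  have key : ∀ j : ℕ, Matrix.trace (C ^ (j + 1)) =
      ((n : R) + (-(n : R)) ^ (j + 1)) * (b * (q + c * d)) ^ (j + 1) := by
    have main : ∀ j : ℕ,
        Matrix.trace (C ^ (j + 1)) =
          ((n : R) + (-(n : R)) ^ (j + 1)) * (b * (q + c * d)) ^ (j + 1) ∧
        Matrix.trace (C ^ (j + 2)) =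
          ((n : R) + (-(n : R)) ^ (j + 2)) * (b * (q + c * d)) ^ (j + 2) := by
      intro j
      induction j with
      | zero =>
        constructor
        · rw [pow_one, htrC]; ring
        · rw [sq, htrC2]; ring
      | succ m ih =>
        refine ⟨ih.2, ?_⟩
        have h3 : m + 1 + 2 = m + 3 := by omega
        rw [h3, hrec m]
        rw [Matrix.trace_add, Matrix.trace_smul, Matrix.trace_smul, ih.1, ih.2,
          smul_eq_mul, smul_eq_mul]
        ring
    exact fun j => (main j).1
  -- conclude
  intro k hk
  obtain ⟨j, rfl⟩ : ∃ j, k = j + 1 := ⟨k - 1, by omega⟩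
  rw [key j]
  have hsub1 : 2 * (j + 1) - 1 = 2 * j + 1 := by omega
  have hsub2 : (j + 1) - 1 = j := by omega
  rw [hsub1, hsub2]
  -- expand powers
  have binom : ∀ m : ℕ, (q + c * d) ^ (m + 1)
      = (c * d) ^ (m + 1) + ((m : R) + 1) * q * (c * d) ^ m := by
    intro m
    induction m with
    | zero => simp; ring
    | succ i ih =>
      have h : (q + c * d) ^ (i + 2) = (q + c * d) ^ (i + 1) * (q + c * d) := by
        rw [← pow_succ]
      rw [h, ih]
      push_cast
      linear_combination (((i : R) + 1) * (c * d) ^ i) * hq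
  have hbpow : b ^ (j + 1) = (r ^ (j + 1)) • c ^ (j + 1) := by
    rw [hb, smul_pow]
  rw [mul_pow, hbpow, binom j]
  -- turn the integer-cast rational scalar into multiplication
  have hint : ∀ (m : ℤ) (x : R), (((m : ℤ) : ℚ)) • x = (m : R) * x := by
    intro m x
    rw [show ((m : ℚ)) • x = ((m : ℚ)) • ((1 : R) * x) by rw [one_mul],
      ← smul_mul_assoc]
    congr 1
    rw [Algebra.smul_def, mul_one]
    simp
  rw [mul_smul, hint, smul_mul_assoc, mul_smul_comm]
  congr 1
  push_cast
  ring
end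

section
/- Let V be a module over ℂ, let n ≥ 1, and let a, A, b, B : Fin n → V. In the exterior algebra Λ = ExteriorAlgebra ℂ V with canonical embedding ι : V → Λ, assume ∑_{γ : Fin n} ι(a γ)·ι(B γ) = 0 and ∑_{γ : Fin n} ι(A γ)·ι(b γ) = 0. Define the n × n matrix Θ over Λ by Θ i j := I•(ι(a i)·ι(B j)) − I•(ι(b i)·ι(A j)), where I = Complex.I acts through the ℂ-algebra structure of Λ, and set S := ∑_{γ} ι(B γ)·ι(b γ) and E := ∑_{γ} ι(A γ)·ι(a γ). Then for every natural number s and all indices i, j, the (i, j) entry of the matrix power Θ^{2s+1} equals (S·E)^s · (Θ i j). -/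
open ExteriorAlgebra

section
variable {V : Type*} [AddCommGroup V] [Module ℂ V]

lemma ii_swap (x y : V) : ι ℂ x * ι ℂ y = - (ι ℂ y * ι ℂ x) :=
  eq_neg_of_add_eq_zero_left (ι_add_mul_swap x y)

lemma pair_comm (x y z : V) :
    (ι ℂ x * ι ℂ y) * ι ℂ z = ι ℂ z * (ι ℂ x * ι ℂ y) := by
  rw [mul_assoc, ii_swap y z, mul_neg, ← mul_assoc, ii_swap x z, neg_mul, neg_neg, mul_assoc]

end

set_option maxHeartbeats 1000000 in
/-- odd powers of the matrix `Θ` in the exterior algebra. -/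
theorem odd_pow_Theta {V : Type*} [AddCommGroup V] [Module ℂ V]
    (n : ℕ) (hn : 1 ≤ n) (a A b B : Fin n → V)
    (h1 : ∑ γ : Fin n, ι ℂ (a γ) * ι ℂ (B γ) = 0)
    (h2 : ∑ γ : Fin n, ι ℂ (A γ) * ι ℂ (b γ) = 0)
    (Θ : Matrix (Fin n) (Fin n) (ExteriorAlgebra ℂ V))
    (hΘ : ∀ i j, Θ i j =
        Complex.I • (ι ℂ (a i) * ι ℂ (B j)) - Complex.I • (ι ℂ (b i) * ι ℂ (A j)))
    (S E : ExteriorAlgebra ℂ V)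
    (hS : S = ∑ γ : Fin n, ι ℂ (B γ) * ι ℂ (b γ))
    (hE : E = ∑ γ : Fin n, ι ℂ (A γ) * ι ℂ (a γ)) :
    ∀ (s : ℕ) (i j : Fin n),
      (Θ ^ (2 * s + 1)) i j = (S * E) ^ s * Θ i j := by
  have h1' : ∑ γ : Fin n, ι ℂ (B γ) * ι ℂ (a γ) = 0 := by
    have e : ∑ γ : Fin n, ι ℂ (B γ) * ι ℂ (a γ)
        = - ∑ γ : Fin n, ι ℂ (a γ) * ι ℂ (B γ) := by
      rw [← Finset.sum_neg_distrib]
      exact Finset.sum_congr rfl fun γ _ => by rw [ii_swap (B γ) (a γ)]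
    rw [e, h1, neg_zero]
  have h2' : ∑ γ : Fin n, ι ℂ (b γ) * ι ℂ (A γ) = 0 := by
    have e : ∑ γ : Fin n, ι ℂ (b γ) * ι ℂ (A γ)
        = - ∑ γ : Fin n, ι ℂ (A γ) * ι ℂ (b γ) := by
      rw [← Finset.sum_neg_distrib]
      exact Finset.sum_congr rfl fun γ _ => by rw [ii_swap (b γ) (A γ)]
    rw [e, h2, neg_zero]
  have hScomm : ∀ z : V, S * ι ℂ z = ι ℂ z * S := by
    intro z
    rw [hS, Finset.sum_mul, Finset.mul_sum]
    exact Finset.sum_congr rfl fun γ _ => pair_comm _ _ _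
  have hEcomm : ∀ z : V, E * ι ℂ z = ι ℂ z * E := by
    intro z
    rw [hE, Finset.sum_mul, Finset.mul_sum]
    exact Finset.sum_congr rfl fun γ _ => pair_comm _ _ _
  have hSE : S * E = E * S := by
    rw [hE, Finset.mul_sum, Finset.sum_mul]
    refine Finset.sum_congr rfl fun γ _ => ?_
    rw [← mul_assoc, hScomm, mul_assoc, hScomm, mul_assoc]
  -- entries of Θ²
  have hsq : ∀ i j, (Θ ^ 2) i j
      = ι ℂ (a i) * S * ι ℂ (A j) + ι ℂ (b i) * E * ι ℂ (B j) := by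
    intro i j
    have expand : ∀ γ, Θ i γ * Θ γ j =
        -(ι ℂ (a i) * (ι ℂ (B γ) * ι ℂ (a γ)) * ι ℂ (B j))
        + ι ℂ (a i) * (ι ℂ (B γ) * ι ℂ (b γ)) * ι ℂ (A j)
        + ι ℂ (b i) * (ι ℂ (A γ) * ι ℂ (a γ)) * ι ℂ (B j)
        - ι ℂ (b i) * (ι ℂ (A γ) * ι ℂ (b γ)) * ι ℂ (A j) := by
      intro γ
      rw [hΘ, hΘ]
      simp only [sub_mul, mul_sub, smul_mul_smul_comm, Complex.I_mul_I, neg_one_smul]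
      noncomm_ring
    have e2 : (Θ ^ 2) i j = ∑ γ : Fin n, Θ i γ * Θ γ j := by
      simp [pow_two, Matrix.mul_apply]
    rw [e2]
    simp only [expand]
    have t1 : ∑ γ : Fin n, ι ℂ (a i) * (ι ℂ (B γ) * ι ℂ (a γ)) * ι ℂ (B j) = 0 := by
      rw [← Finset.sum_mul, ← Finset.mul_sum, h1', mul_zero, zero_mul]
    have t2 : ∑ γ : Fin n, ι ℂ (a i) * (ι ℂ (B γ) * ι ℂ (b γ)) * ι ℂ (A j)
        = ι ℂ (a i) * S * ι ℂ (A j) := by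
      rw [← Finset.sum_mul, ← Finset.mul_sum, ← hS]
    have t3 : ∑ γ : Fin n, ι ℂ (b i) * (ι ℂ (A γ) * ι ℂ (a γ)) * ι ℂ (B j)
        = ι ℂ (b i) * E * ι ℂ (B j) := by
      rw [← Finset.sum_mul, ← Finset.mul_sum, ← hE]
    have t4 : ∑ γ : Fin n, ι ℂ (b i) * (ι ℂ (A γ) * ι ℂ (b γ)) * ι ℂ (A j) = 0 := by
      rw [← Finset.sum_mul, ← Finset.mul_sum, h2, mul_zero, zero_mul]
    rw [Finset.sum_sub_distrib, Finset.sum_add_distrib, Finset.sum_add_distrib,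
      Finset.sum_neg_distrib, t1, t2, t3, t4, neg_zero, zero_add, sub_zero]
  -- cube entries
  have hcube : ∀ i j, (Θ ^ 3) i j = S * E * Θ i j := by
    intro i j
    have h3 : (Θ ^ 3) i j = ∑ γ : Fin n, (Θ ^ 2) i γ * Θ γ j := by
      have e : Θ ^ 3 = Θ ^ 2 * Θ := pow_succ Θ 2
      rw [e, Matrix.mul_apply]
    rw [h3]
    have expand : ∀ γ, (Θ ^ 2) i γ * Θ γ j =
        (Complex.I • (ι ℂ (a i) * S * (ι ℂ (A γ) * ι ℂ (a γ)) * ι ℂ (B j))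
        - Complex.I • (ι ℂ (a i) * S * (ι ℂ (A γ) * ι ℂ (b γ)) * ι ℂ (A j)))
        + (Complex.I • (ι ℂ (b i) * E * (ι ℂ (B γ) * ι ℂ (a γ)) * ι ℂ (B j))
        - Complex.I • (ι ℂ (b i) * E * (ι ℂ (B γ) * ι ℂ (b γ)) * ι ℂ (A j))) := by
      intro γ
      rw [hsq, hΘ]
      simp only [add_mul, mul_sub, mul_smul_comm, mul_assoc, smul_add]
      abel
    simp only [expand]
    have t1 : ∑ γ : Fin n, Complex.I • (ι ℂ (a i) * S * (ι ℂ (A γ) * ι ℂ (a γ)) * ι ℂ (B j))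
        = Complex.I • (ι ℂ (a i) * S * E * ι ℂ (B j)) := by
      rw [← Finset.smul_sum, ← Finset.sum_mul, ← Finset.mul_sum, ← hE]
    have t2 : ∑ γ : Fin n, Complex.I • (ι ℂ (a i) * S * (ι ℂ (A γ) * ι ℂ (b γ)) * ι ℂ (A j))
        = 0 := by
      rw [← Finset.smul_sum, ← Finset.sum_mul, ← Finset.mul_sum, h2, mul_zero, zero_mul,
        smul_zero]
    have t3 : ∑ γ : Fin n, Complex.I • (ι ℂ (b i) * E * (ι ℂ (B γ) * ι ℂ (a γ)) * ι ℂ (B j))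
        = 0 := by
      rw [← Finset.smul_sum, ← Finset.sum_mul, ← Finset.mul_sum, h1', mul_zero, zero_mul,
        smul_zero]
    have t4 : ∑ γ : Fin n, Complex.I • (ι ℂ (b i) * E * (ι ℂ (B γ) * ι ℂ (b γ)) * ι ℂ (A j))
        = Complex.I • (ι ℂ (b i) * E * S * ι ℂ (A j)) := by
      rw [← Finset.smul_sum, ← Finset.sum_mul, ← Finset.mul_sum, ← hS]
    rw [Finset.sum_add_distrib, Finset.sum_sub_distrib, Finset.sum_sub_distrib,
      t1, t2, t3, t4, sub_zero, zero_sub, ← sub_eq_add_neg]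
    -- now: I•(aᵢ S E B_j) - I•(bᵢ E S A_j) = S E Θ i j
    have c1 : ι ℂ (a i) * S * E * ι ℂ (B j) = S * E * (ι ℂ (a i) * ι ℂ (B j)) := by
      rw [← hScomm, mul_assoc S, ← hEcomm, ← mul_assoc, mul_assoc]
    have c2 : ι ℂ (b i) * E * S * ι ℂ (A j) = S * E * (ι ℂ (b i) * ι ℂ (A j)) := by
      rw [← hEcomm, mul_assoc E, ← hScomm, ← mul_assoc, ← hSE, mul_assoc]
    rw [c1, c2, hΘ, mul_sub, mul_smul_comm, mul_smul_comm]
  intro s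
  induction s with
  | zero => intro i j; simp
  | succ s ih =>
    intro i j
    have hp : Θ ^ (2 * (s + 1) + 1) = Θ ^ (2 * s + 1) * Θ ^ 2 := by
      rw [show 2 * (s + 1) + 1 = (2 * s + 1) + 2 by ring, pow_add]
    rw [hp, Matrix.mul_apply]
    have step : ∀ γ, (Θ ^ (2 * s + 1)) i γ * (Θ ^ 2) γ j
        = (S * E) ^ s * (Θ i γ * (Θ ^ 2) γ j) := by
      intro γ; rw [ih, mul_assoc]
    simp only [step]
    rw [← Finset.mul_sum]
    have : ∑ γ : Fin n, Θ i γ * (Θ ^ 2) γ j = (Θ ^ 3) i j := by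
      have e : Θ ^ 3 = Θ * Θ ^ 2 := pow_succ' Θ 2
      rw [e, Matrix.mul_apply]
    rw [this, hcube i j, pow_succ, mul_assoc, mul_assoc, mul_assoc S E (Θ i j)]
end

section
/- Let n ≥ 2 be a natural number and let R be a commutative ℚ-algebra. Let c, d, q ∈ R satisfy q·q = 0 and n • (q·d^{n−1}) = −(n+1) • (c·d^n). Let ς : ℕ → ℕ satisfy ∑_{k=1}^{n} k·ς(k) = n. Then ∏_{k=1}^{n} ( (((n+1)/(n+2))^k · ((n : ℤ) + (−n)^k)) • (c^{2k−1}·(c·d + k·q)·d^{k−1}) )^{ς(k)} = ( −(n : ℚ) · ((n+1)/(n+2))^n · (∏_{k=1}^{n} ((n : ℤ) + (−n)^k)^{ς(k)} : ℤ) ) • (c^{2n}·d^n). -/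
/-!
Write `u = c²d` and `t = cq`. Since `t² = 0`, the binomial expansion of `(u + t)ᵏ` stops after
the linear term, and that expansion is exactly the `k`-th factor `c^{2k-1}(cd + kq)d^{k-1}`.
Hence the product collapses to `(u + t)^{∑ k ς(k)} = (u + t)ⁿ = uⁿ + n u^{n-1} t`, and the relation
between `n q d^{n-1}` and `c dⁿ` turns this into `-n c^{2n} dⁿ`. The scalar coefficients multiply
out the same way, `∏ (rᵏ)^{ς(k)} = rⁿ`.
-/

theorem add_pow_succ_of_mul_self_eq_zero {R : Type*} [CommRing R] {x y : R} (h : y * y = 0)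
    (k : ℕ) : (x + y) ^ (k + 1) = x ^ (k + 1) + (k + 1) * x ^ k * y := by
  induction k with
  | zero => simp
  | succ k ih =>
    rw [pow_succ, ih]
    push_cast
    linear_combination ((k : R) + 1) * x ^ k * h

theorem Finset.prod_pow_pow_eq_pow_sum {M : Type*} [CommMonoid M] (s : Finset ℕ) (x : M)
    (m : ℕ → ℕ) : ∏ k ∈ s, (x ^ k) ^ m k = x ^ ∑ k ∈ s, k * m k := by
  simp_rw [← pow_mul]
  exact Finset.prod_pow_eq_pow_sum s _ x

section SquareZero

variable {R : Type*} [CommRing R] {c d q : R}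

theorem pow_mul_add_mul_mul_pow_eq_add_pow (hq : q * q = 0) {k : ℕ} (hk : 1 ≤ k) :
    c ^ (2 * k - 1) * (c * d + (k : R) * q) * d ^ (k - 1) = (c ^ 2 * d + c * q) ^ k := by
  obtain ⟨j, rfl⟩ := Nat.exists_eq_add_of_le' hk
  have hcq : c * q * (c * q) = 0 := by linear_combination c * c * hq
  rw [add_pow_succ_of_mul_self_eq_zero hcq, show 2 * (j + 1) - 1 = 2 * j + 1 by omega,
    Nat.add_sub_cancel]
  push_cast
  ring

theorem add_pow_eq_neg_natCast_mul {n : ℕ} (hn : 1 ≤ n) (hq : q * q = 0)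
    (hrel : (n : R) * (q * d ^ (n - 1)) = -(((n : R) + 1) * (c * d ^ n))) :
    (c ^ 2 * d + c * q) ^ n = -(n : R) * (c ^ (2 * n) * d ^ n) := by
  obtain ⟨m, rfl⟩ := Nat.exists_eq_add_of_le' hn
  have hcq : c * q * (c * q) = 0 := by linear_combination c * c * hq
  rw [add_pow_succ_of_mul_self_eq_zero hcq]
  rw [Nat.add_sub_cancel] at hrel
  push_cast at hrel ⊢
  linear_combination c ^ (2 * m + 1) * hrel

end SquareZero

/-- evaluation of the product `∏ (tr Ċ^k)^{ς k}` in Step 2 of the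
proof of Theorem 5.1, stated pointwise in a commutative ℚ-algebra. -/
theorem prod_trace_pow_eval (n : ℕ) (hn : 2 ≤ n)
    {R : Type*} [CommRing R] [Algebra ℚ R]
    (c d q : R) (hq : q * q = 0)
    (hrel : n • (q * d ^ (n - 1)) = -((n + 1) • (c * d ^ n)))
    (ς : ℕ → ℕ) (hς : ∑ k ∈ Finset.Icc 1 n, k * ς k = n) :
    ∏ k ∈ Finset.Icc 1 n,
        (((((n : ℚ) + 1) / ((n : ℚ) + 2)) ^ k *
              (((n : ℤ) + (-(n : ℤ)) ^ k : ℤ) : ℚ)) •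
            (c ^ (2 * k - 1) * (c * d + (k : R) * q) * d ^ (k - 1))) ^ ς k =
      (-(n : ℚ) * (((n : ℚ) + 1) / ((n : ℚ) + 2)) ^ n *
          ((∏ k ∈ Finset.Icc 1 n, ((n : ℤ) + (-(n : ℤ)) ^ k) ^ ς k : ℤ) : ℚ)) •
        (c ^ (2 * n) * d ^ n) := by
  have hfactors : ∏ k ∈ Finset.Icc 1 n,
      (c ^ (2 * k - 1) * (c * d + (k : R) * q) * d ^ (k - 1)) ^ ς k =
        (-(n : ℚ)) • (c ^ (2 * n) * d ^ n) := by
    rw [Finset.prod_congr rfl fun k hk ↦ by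
        rw [pow_mul_add_mul_mul_pow_eq_add_pow hq (Finset.mem_Icc.mp hk).1],
      Finset.prod_pow_pow_eq_pow_sum, hς, add_pow_eq_neg_natCast_mul (by omega) hq,
      Algebra.smul_def, map_neg, map_natCast]
    simpa only [nsmul_eq_mul, Nat.cast_add, Nat.cast_one] using hrel
  have hscalars : ∏ k ∈ Finset.Icc 1 n,
      ((((n : ℚ) + 1) / ((n : ℚ) + 2)) ^ k * (((n : ℤ) + (-(n : ℤ)) ^ k : ℤ) : ℚ)) ^ ς k =
        (((n : ℚ) + 1) / ((n : ℚ) + 2)) ^ n *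
          ((∏ k ∈ Finset.Icc 1 n, ((n : ℤ) + (-(n : ℤ)) ^ k) ^ ς k : ℤ) : ℚ) := by
    rw [Finset.prod_congr rfl fun k _ ↦ mul_pow _ _ (ς k), Finset.prod_mul_distrib,
      Finset.prod_pow_pow_eq_pow_sum, hς]
    norm_cast
  simp only [smul_pow]
  rw [Finset.prod_smul, hfactors, hscalars, smul_smul]
  congr 1
  ring
end
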